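/- Let R_1, R_2, R_3 > 0 and τ_1, τ_2, τ_3 > 0 with R_1/τ_1 < R_2/τ_2. Define S_{(3,2,1)} = (2^{R_3}-1)/(2^{R_3/τ_3}-1) + 2^{R_3}(2^{R_2}-1)/(2^{R_2/τ_2}-1) + 2^{R_2+R_3}(2^{R_1}-1)/(2^{R_1/τ_1}-1) and S_{(3,1,2)} = (2^{R_3}-1)/(2^{R_3/τ_3}-1) + 2^{R_3}(2^{R_1}-1)/(2^{R_1/τ_1}-1) + 2^{R_1+R_3}(2^{R_2}-1)/(2^{R_2/τ_2}-1). Then S_{(3,2,1)} - S_{(3,1,2)} = 2^{R_3}(2^{R_1}-1)(2^{R_2}-1)[1/(2^{R_1/τ_1}-1) - 1/(2^{R_2/τ_2}-1)] > 0. -/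
import Mathlib

theorem stmt_9 (R₁ R₂ R₃ τ₁ τ₂ τ₃ : ℝ)
    (hR₁ : 0 < R₁) (hR₂ : 0 < R₂) (hR₃ : 0 < R₃)
    (hτ₁ : 0 < τ₁) (hτ₂ : 0 < τ₂) (hτ₃ : 0 < τ₃)
    (hord : R₁ / τ₁ < R₂ / τ₂) :
    (((2 : ℝ) ^ R₃ - 1) / ((2 : ℝ) ^ (R₃ / τ₃) - 1) +
        (2 : ℝ) ^ R₃ * ((2 : ℝ) ^ R₂ - 1) / ((2 : ℝ) ^ (R₂ / τ₂) - 1) +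
        (2 : ℝ) ^ (R₂ + R₃) * ((2 : ℝ) ^ R₁ - 1) / ((2 : ℝ) ^ (R₁ / τ₁) - 1)) -
      (((2 : ℝ) ^ R₃ - 1) / ((2 : ℝ) ^ (R₃ / τ₃) - 1) +
        (2 : ℝ) ^ R₃ * ((2 : ℝ) ^ R₁ - 1) / ((2 : ℝ) ^ (R₁ / τ₁) - 1) +
        (2 : ℝ) ^ (R₁ + R₃) * ((2 : ℝ) ^ R₂ - 1) / ((2 : ℝ) ^ (R₂ / τ₂) - 1)) =
      (2 : ℝ) ^ R₃ * ((2 : ℝ) ^ R₁ - 1) * ((2 : ℝ) ^ R₂ - 1) *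
        (1 / ((2 : ℝ) ^ (R₁ / τ₁) - 1) - 1 / ((2 : ℝ) ^ (R₂ / τ₂) - 1)) ∧
    0 < (2 : ℝ) ^ R₃ * ((2 : ℝ) ^ R₁ - 1) * ((2 : ℝ) ^ R₂ - 1) *
        (1 / ((2 : ℝ) ^ (R₁ / τ₁) - 1) - 1 / ((2 : ℝ) ^ (R₂ / τ₂) - 1)) := by
  have h2 : (1 : ℝ) < 2 := one_lt_two
  have hgt : ∀ x : ℝ, 0 < x → (1 : ℝ) < (2 : ℝ) ^ x := fun x hx =>
    Real.one_lt_rpow_iff_of_pos (by norm_num) |>.2 (Or.inl ⟨h2, hx⟩)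
  have ha : (0:ℝ) < (2:ℝ) ^ (R₁/τ₁) - 1 := sub_pos.2 (hgt _ (div_pos hR₁ hτ₁))
  have hb : (0:ℝ) < (2:ℝ) ^ (R₂/τ₂) - 1 := sub_pos.2 (hgt _ (div_pos hR₂ hτ₂))
  have hab : (2:ℝ) ^ (R₁/τ₁) - 1 < (2:ℝ) ^ (R₂/τ₂) - 1 := by
    have := Real.rpow_lt_rpow_of_exponent_lt h2 hord
    linarith
  constructor
  · have e12 : (2:ℝ) ^ (R₂ + R₃) = (2:ℝ) ^ R₂ * (2:ℝ) ^ R₃ := Real.rpow_add (by norm_num) _ _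
    have e13 : (2:ℝ) ^ (R₁ + R₃) = (2:ℝ) ^ R₁ * (2:ℝ) ^ R₃ := Real.rpow_add (by norm_num) _ _
    rw [e12, e13]
    field_simp
    ring
  · have h1 : (0:ℝ) < (2:ℝ) ^ R₃ := Real.rpow_pos_of_pos (by norm_num) _
    have h2' : (0:ℝ) < (2:ℝ) ^ R₁ - 1 := sub_pos.2 (hgt _ hR₁)
    have h3 : (0:ℝ) < (2:ℝ) ^ R₂ - 1 := sub_pos.2 (hgt _ hR₂)
    have h4 : (0:ℝ) < 1 / ((2:ℝ) ^ (R₁/τ₁) - 1) - 1 / ((2:ℝ) ^ (R₂/τ₂) - 1) :=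
      sub_pos.2 (one_div_lt_one_div_of_lt ha hab)
    positivity
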